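/- Let (R, m) be a Noetherian local ring with residue field k and E = E_R(k) the injective hull of k. Let I ⊆ R be an ideal and M, N two R-modules with Supp_R M ⊆ V(I) and M finitely generated. Then M ⊗_R Hom_R(Γ_I(N), E) is naturally isomorphic to M ⊗_R Hom_R(N, E). -/

import Mathlib

/-!
Since `Supp M ⊆ V(I)` and `M` is finitely generated, some `I ^ n` annihilates `M`. Restriction
`Hom(N, E) → Hom(Γ_I N, E)` is onto because `E` is injective, so after `M ⊗ -` it stays onto and
its kernel is the image of `M ⊗ K`, `K` the maps vanishing on `Γ_I N`. Such a map kills the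
`I ^ n`-torsion, and injectivity of `E` writes it as `∑ aᵢ gᵢ` with `aᵢ ∈ I ^ n`; hence
`m ⊗ f = 0` for all `m`, and the map is also injective.
-/

open CategoryTheory TensorProduct

universe u

noncomputable section

/-- The `I`-torsion (section functor) submodule `Γ_I(N) = {n ∈ N | I^k n = 0 for some k}`. -/
def torsionGamma {R : Type u} [CommRing R] (I : Ideal R) (N : Type u) [AddCommGroup N]
    [Module R N] : Submodule R N :=
  ⨆ k : ℕ, Submodule.torsionBySet R N (I ^ k : Ideal R)

/-- `E` is an injective hull of the residue field of the local ring `R`: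
it is an injective module and an essential extension of `R/m`. -/
def IsResidueFieldInjectiveHull (R : Type u) [CommRing R] [IsLocalRing R] (E : Type u)
    [AddCommGroup E] [Module R E] : Prop :=
  Injective (ModuleCat.of R E) ∧
    ∃ f : IsLocalRing.ResidueField R →ₗ[R] E, Function.Injective f ∧
      ∀ N : Submodule R E, N ≠ ⊥ → N ⊓ LinearMap.range f ≠ ⊥

theorem Module.exists_pow_le_annihilator_of_support_subset_zeroLocus {R M : Type*} [CommRing R]
    [IsNoetherianRing R] [AddCommGroup M] [Module R M] [Module.Finite R M] {I : Ideal R}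
    (hM : Module.support R M ⊆ PrimeSpectrum.zeroLocus (I : Set R)) :
    ∃ n : ℕ, I ^ n ≤ Module.annihilator R M := by
  rw [Module.support_eq_zeroLocus, PrimeSpectrum.zeroLocus_subset_zeroLocus_iff] at hM
  exact Ideal.exists_pow_le_of_le_radical_of_fg hM (IsNoetherian.noetherian I)

theorem LinearMap.ker_pi_smul_id {R N : Type*} [CommRing R] [AddCommGroup N] [Module R N]
    (s : Set R) :
    ker (LinearMap.pi fun a : s => (a : R) • LinearMap.id : N →ₗ[R] s → N) =
      Submodule.torsionBySet R N s := by
  ext x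
  simp [Submodule.mem_torsionBySet_iff, funext_iff]

theorem Module.Injective.exists_comp_eq_of_ker_le {R : Type u} [CommRing R] {E : Type u}
    [AddCommGroup E] [Module R E] [Module.Injective R E] {N P : Type*} [AddCommGroup N]
    [Module R N] [AddCommGroup P] [Module R P] (ψ : N →ₗ[R] P) (f : N →ₗ[R] E)
    (h : LinearMap.ker ψ ≤ LinearMap.ker f) : ∃ g : P →ₗ[R] E, g ∘ₗ ψ = f := by
  obtain ⟨g, hg⟩ := Module.Injective.extension_property R E _ _ ((LinearMap.ker ψ).liftQ ψ le_rfl)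
    (LinearMap.ker_eq_bot.mp (Submodule.ker_liftQ_eq_bot _ _ _ le_rfl))
    ((LinearMap.ker ψ).liftQ f h)
  exact ⟨g, LinearMap.ext fun x => LinearMap.congr_fun hg ((LinearMap.ker ψ).mkQ x)⟩

/-- If `J = (a₁, …, aₖ)` and `f` kills the `J`-torsion, then `f` factors through
`x ↦ (aᵢ x)ᵢ` by injectivity of `E`, which exhibits `f` as `∑ aᵢ gᵢ`. -/
theorem LinearMap.mem_ideal_smul_top_of_torsionBySet_le_ker {R : Type u} [CommRing R]
    {E : Type u} [AddCommGroup E] [Module R E] [Module.Injective R E] {N : Type*}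
    [AddCommGroup N] [Module R N] {J : Ideal R} (hJ : J.FG) (f : N →ₗ[R] E)
    (hf : Submodule.torsionBySet R N J ≤ ker f) : f ∈ J • (⊤ : Submodule R (N →ₗ[R] E)) := by
  classical
  obtain ⟨s, rfl⟩ := hJ
  let ψ : N →ₗ[R] s → N := LinearMap.pi fun a => (a : R) • LinearMap.id
  rw [← Submodule.torsionBySet_eq_torsionBySet_span, ← LinearMap.ker_pi_smul_id] at hf
  obtain ⟨g, rfl⟩ := Module.Injective.exists_comp_eq_of_ker_le ψ f hf
  have hsum : g ∘ₗ ψ = ∑ a : s, (a : R) • (g ∘ₗ LinearMap.single R (fun _ => N) a) := by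
    ext x
    have hψx : ψ x = ∑ a : s, Pi.single a ((a : R) • x) := (Finset.univ_sum_single _).symm
    simp [hψx, Pi.single_smul']
  rw [hsum]
  exact Submodule.sum_mem _ fun a _ => Submodule.smul_mem_smul (Ideal.subset_span a.2) Submodule.mem_top

theorem TensorProduct.tmul_eq_zero_of_mem_ideal_smul {R M P : Type*} [CommRing R]
    [AddCommGroup M] [Module R M] [AddCommGroup P] [Module R P] {J : Ideal R}
    (hJ : J ≤ Module.annihilator R M) (m : M) {x : P} (hx : x ∈ J • (⊤ : Submodule R P)) :
    m ⊗ₜ[R] x = 0 := by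
  refine Submodule.smul_induction_on hx (fun r hr y _ => ?_) fun y z hy hz => ?_
  · rw [← smul_tmul, Module.mem_annihilator.mp (hJ hr) m, zero_tmul]
  · rw [tmul_add, hy, hz, add_zero]

theorem LinearMap.lTensor_bijective_of_ker_le_ideal_smul {R M P Q : Type*} [CommRing R]
    [AddCommGroup M] [Module R M] [AddCommGroup P] [Module R P] [AddCommGroup Q] [Module R Q]
    {J : Ideal R} (hJ : J ≤ Module.annihilator R M) (g : P →ₗ[R] Q)
    (hg : Function.Surjective g) (hker : ker g ≤ J • ⊤) :
    Function.Bijective (lTensor M g) := by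
  refine ⟨?_, lTensor_surjective M hg⟩
  have hexact := lTensor_exact M (exact_subtype_ker_map g) hg
  rw [← ker_eq_bot, hexact.linearMap_ker_eq, range_eq_bot]
  ext m k
  exact tmul_eq_zero_of_mem_ideal_smul hJ m (hker k.2)

/-- Over a Noetherian local ring, for `M` finitely generated with
`Supp_R M ⊆ V(I)` and `E` the injective hull of the residue field, the natural map
`M ⊗_R Hom_R(N, E) → M ⊗_R Hom_R(Γ_I(N), E)` induced by restriction along `Γ_I(N) ⊆ N`
is an isomorphism. -/
theorem tensor_hom_torsionGamma_equiv {R : Type u} [CommRing R] [IsNoetherianRing R]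
    [IsLocalRing R] (E : Type u) [AddCommGroup E] [Module R E]
    (hE : IsResidueFieldInjectiveHull R E) (I : Ideal R) (M N : Type u)
    [AddCommGroup M] [Module R M] [Module.Finite R M] [AddCommGroup N] [Module R N]
    (hM : Module.support R M ⊆ PrimeSpectrum.zeroLocus (I : Set R)) :
    Function.Bijective
      (LinearMap.lTensor M (LinearMap.lcomp R E (torsionGamma I N).subtype)) := by
  have : Module.Injective R E := (Module.injective_iff_injective_object R E).mpr hE.1
  obtain ⟨n, hn⟩ := Module.exists_pow_le_annihilator_of_support_subset_zeroLocus hM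
  have hsurj : Function.Surjective (LinearMap.lcomp R E (torsionGamma I N).subtype) := fun h =>
    Module.Injective.extension_property R E _ _ _ (torsionGamma I N).injective_subtype h
  refine LinearMap.lTensor_bijective_of_ker_le_ideal_smul hn _ hsurj fun f hf => ?_
  have hΓ : torsionGamma I N ≤ LinearMap.ker f := by
    rw [← (torsionGamma I N).range_subtype, LinearMap.range_le_ker_iff]
    exact hf
  exact LinearMap.mem_ideal_smul_top_of_torsionBySet_le_ker (IsNoetherian.noetherian _) f
    ((le_iSup (fun k => Submodule.torsionBySet R N ((I ^ k : Ideal R) : Set R)) n).trans hΓ)
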